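/- arXiv:math/0303183 — 2 statements merged into one kernel-verified Lean document; each statement's English description precedes it below -/
import Mathlib

section
/- Let b : ℝ^m → ℝ be a smooth function equal to 1 outside some compact set, and set Y = b⁻¹({0}) ∪ {0}. Let H : ℝ^m → ℝ be a compactly supported smooth function with H(x) = 1 for every x in closure({x : b(x) ≠ 1}) ∪ {0}. Then the closure, with respect to the supremum norm, of the set {x ↦ b(x)²·a(x) + λ·H(x) : a ∈ C_c^∞(ℝ^m) with a(0) = 0, λ ∈ ℂ} inside C₀(ℝ^m) is exactly {f ∈ C₀(ℝ^m) : f is constant on Y}, i.e. {f ∈ C₀(ℝ^m) : f(x) = f(y) for all x, y ∈ Y}. -/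
/-!
A function of the form `b² a + λ H` equals `λ` on `Y`, since `b = 0` or `a = 0` there and
`H = 1` on `Y`; evaluations are continuous on `C₀`, so this survives in the closure.
Conversely, if `f` is constant (say `f 0`) on `Y`, then `g = f - f 0 • H` is a `C₀` function
vanishing on the closed set `Y`. Approximate `g` uniformly by a smooth `ψ`, and multiply by a
compactly supported smooth cutoff that vanishes near `Y` and equals `1` on the compact set where
`g` is not small. The product `p` vanishes near the zeros of `b`, so `a = p / b²` is smooth and
`b² a + f 0 • H = p + f 0 • H` is uniformly close to `f`.
-/

open Set Filter Metric
open scoped ZeroAtInfty Topology ContDiff Manifold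

theorem ContDiff.div_of_eventuallyEq_zero {𝕜 E 𝕜' : Type*} [NontriviallyNormedField 𝕜]
    [NormedAddCommGroup E] [NormedSpace 𝕜 E] [NormedField 𝕜'] [NormedAlgebra 𝕜 𝕜']
    {n : WithTop ℕ∞} {p q : E → 𝕜'} (hp : ContDiff 𝕜 n p) (hq : ContDiff 𝕜 n q)
    (hpq : ∀ x, q x = 0 → p =ᶠ[𝓝 x] 0) : ContDiff 𝕜 n fun x => p x / q x := by
  rw [contDiff_iff_contDiffAt]
  intro x
  by_cases hx : q x = 0
  · refine contDiffAt_const (c := (0 : 𝕜')).congr_of_eventuallyEq ?_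
    filter_upwards [hpq x hx] with y hy
    simp [hy]
  · simpa only [div_eq_mul_inv] using hp.contDiffAt.mul (hq.contDiffAt.fun_inv hx)

theorem exists_contDiff_hasCompactSupport_eventuallyEq_zero_eqOn_one {E : Type*}
    [NormedAddCommGroup E] [NormedSpace ℝ E] [FiniteDimensional ℝ E] {s K : Set E}
    (hs : IsClosed s) (hK : IsCompact K) (hd : Disjoint s K) :
    ∃ χ : E → ℝ, ContDiff ℝ ∞ χ ∧ HasCompactSupport χ ∧ χ =ᶠ[𝓝ˢ s] 0 ∧ EqOn χ 1 K ∧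
      ∀ x, χ x ∈ Icc 0 1 := by
  obtain ⟨R, hKR⟩ := hK.isBounded.subset_ball 0
  have hd' : Disjoint (s ∪ (ball 0 R)ᶜ) K :=
    disjoint_union_left.mpr ⟨hd, disjoint_compl_left.mono_right hKR⟩
  obtain ⟨χ, hχ0, hχ1, hχ01⟩ := exists_contMDiffMap_zero_one_nhds_of_isClosed 𝓘(ℝ, E)
    (n := (⊤ : ℕ∞)) (hs.union isOpen_ball.isClosed_compl) hK.isClosed hd'
  refine ⟨χ, contMDiff_iff_contDiff.mp χ.contMDiff, ?_, ?_, fun x hx => hχ1.self_of_nhdsSet x hx,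
    hχ01⟩
  · refine HasCompactSupport.intro (isCompact_closedBall 0 R) fun x hx => ?_
    exact hχ0.self_of_nhdsSet x (Or.inr fun hx' => hx (ball_subset_closedBall hx'))
  · exact hχ0.filter_mono (nhdsSet_mono subset_union_left)

theorem exists_contDiff_hasCompactSupport_eventuallyEq_zero_norm_sub_le {E F : Type*}
    [NormedAddCommGroup E] [NormedSpace ℝ E] [FiniteDimensional ℝ E]
    [NormedAddCommGroup F] [NormedSpace ℝ F] [CompleteSpace F] {g : E → F}
    (hg : Continuous g) (hg0 : Tendsto g (cocompact E) (𝓝 0)) {s : Set E} (hs : IsClosed s)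
    (hgs : EqOn g 0 s) {ε : ℝ} (hε : 0 < ε) :
    ∃ p : E → F, ContDiff ℝ ∞ p ∧ HasCompactSupport p ∧ p =ᶠ[𝓝ˢ s] 0 ∧
      ∀ x, ‖g x - p x‖ ≤ ε := by
  obtain ⟨ψ, hψ, hgψ⟩ :=
    (hg.uniformContinuous_of_tendsto_cocompact hg0).exists_contDiff_dist_le (half_pos hε)
  set K := {x | ε / 4 ≤ ‖g x‖}
  have hK : IsCompact K := by
    obtain ⟨t, ht, htg⟩ := mem_cocompact.mp (hg0 (ball_mem_nhds 0 (by positivity : 0 < ε / 4)))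
    refine ht.of_isClosed_subset (isClosed_le continuous_const hg.norm) fun x hx => ?_
    by_contra hxt
    simpa using (htg hxt).trans_le (show ε / 4 ≤ ‖g x‖ from hx)
  have hsK : Disjoint s K := disjoint_left.mpr fun x hx hxK => by
    simp only [K, mem_ofPred_eq, hgs hx, Pi.zero_apply, norm_zero] at hxK
    linarith
  obtain ⟨χ, hχ, hχc, hχs, hχK, hχ01⟩ :=
    exists_contDiff_hasCompactSupport_eventuallyEq_zero_eqOn_one hs hK hsK
  refine ⟨fun x => χ x • ψ x, hχ.smul hψ, hχc.smul_right,
    hχs.mono fun x hx => by simp [hx], fun x => ?_⟩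
  have hψg : ‖g x - ψ x‖ < ε / 2 := by rw [← dist_eq_norm, dist_comm]; exact hgψ x
  by_cases hx : x ∈ K
  · simp only [hχK hx, Pi.one_apply, one_smul]
    linarith
  · have hgx : ‖g x‖ < ε / 4 := not_le.mp hx
    have hχx : ‖χ x‖ ≤ 1 := by
      rw [Real.norm_of_nonneg (hχ01 x).1]; exact (hχ01 x).2
    calc ‖g x - χ x • ψ x‖ ≤ ‖g x‖ + ‖χ x‖ * ‖ψ x‖ :=
          (norm_sub_le _ _).trans_eq (by rw [norm_smul])
      _ ≤ ‖g x‖ + 1 * (‖g x‖ + ‖g x - ψ x‖) := by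
        gcongr
        exact norm_le_norm_add_norm_sub _ _
      _ ≤ ε := by linarith

namespace ZeroAtInftyContinuousMap

variable {α β : Type*} [TopologicalSpace α] [MetricSpace β] [Zero β]

theorem dist_le {f g : C₀(α, β)} {C : ℝ} (hC : 0 ≤ C) :
    dist f g ≤ C ↔ ∀ x, dist (f x) (g x) ≤ C := by
  rw [← dist_toBCF_eq_dist]
  exact BoundedContinuousFunction.dist_le hC

theorem continuous_eval_const (x : α) : Continuous fun f : C₀(α, β) => f x :=
  (BoundedContinuousFunction.lipschitz_eval_const x).continuous.comp isometry_toBCF.continuous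

theorem isClosed_setOf_forall_eq (s : Set α) :
    IsClosed {f : C₀(α, β) | ∀ x ∈ s, ∀ y ∈ s, f x = f y} := by
  simp only [ofPred_forall]
  exact isClosed_biInter fun x _ => isClosed_biInter fun y _ =>
    isClosed_eq (continuous_eval_const x) (continuous_eval_const y)

end ZeroAtInftyContinuousMap

theorem closure_of_bab_plus_H_eq_functions_constant_on_Y_general
    {m : ℕ} (b : EuclideanSpace ℝ (Fin m) → ℝ)
    (hb : ContDiff ℝ (⊤ : ℕ∞) b)
    (H : EuclideanSpace ℝ (Fin m) → ℝ) (hH : ContDiff ℝ (⊤ : ℕ∞) H)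
    (hHc : HasCompactSupport H)
    (hH1 : ∀ x ∈ closure {x | b x ≠ 1} ∪ ({0} : Set (EuclideanSpace ℝ (Fin m))),
      H x = 1) :
    closure {f : C₀(EuclideanSpace ℝ (Fin m), ℂ) |
        ∃ (a : EuclideanSpace ℝ (Fin m) → ℂ) (lam : ℂ),
          ContDiff ℝ (⊤ : ℕ∞) a ∧ HasCompactSupport a ∧ a 0 = 0 ∧
          ∀ x, f x = (↑(b x) : ℂ) ^ 2 * a x + lam * (↑(H x) : ℂ)}
      = {f : C₀(EuclideanSpace ℝ (Fin m), ℂ) |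
          ∀ x ∈ b ⁻¹' {0} ∪ ({0} : Set (EuclideanSpace ℝ (Fin m))),
          ∀ y ∈ b ⁻¹' {0} ∪ ({0} : Set (EuclideanSpace ℝ (Fin m))),
            f x = f y} := by
  set Y := b ⁻¹' {0} ∪ ({0} : Set (EuclideanSpace ℝ (Fin m)))
  have hHY : ∀ z ∈ Y, H z = 1 := fun z hz =>
    hH1 z (hz.imp_left fun hz => subset_closure (by simp_all))
  refine Subset.antisymm
    (closure_minimal ?_ (ZeroAtInftyContinuousMap.isClosed_setOf_forall_eq Y)) fun f hf => ?_
  · rintro f ⟨a, lam, -, -, ha0, hf⟩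
    have hfY : ∀ z ∈ Y, f z = lam := fun z hz => by
      rw [hf, hHY z hz]
      rcases hz with hz | rfl <;> simp_all
    exact fun x hx y hy => (hfY x hx).trans (hfY y hy).symm
  rw [Metric.mem_closure_iff]
  intro ε hε
  have hH' : HasCompactSupport fun x => f 0 * (H x : ℂ) :=
    (hHc.comp_left Complex.ofReal_zero).mul_left
  obtain ⟨p, hp, hpc, hpY, hfp⟩ :=
    exists_contDiff_hasCompactSupport_eventuallyEq_zero_norm_sub_le
      (g := fun x => f x - f 0 * H x) (s := Y) (by fun_prop)
      (by simpa using (zero_at_infty f).sub hH'.is_zero_at_infty)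
      ((isClosed_singleton.preimage hb.continuous).union isClosed_singleton)
      (fun z hz => by simp [hf z hz 0 (Or.inr rfl), hHY z hz]) (half_pos hε)
  have hpb : ∀ x, (b x : ℂ) ^ 2 = 0 → p =ᶠ[𝓝 x] 0 := fun x hx =>
    hpY.filter_mono (nhds_le_nhdsSet (Or.inl (by simpa using hx)))
  have hb2 : ContDiff ℝ ∞ fun x => (b x : ℂ) ^ 2 := (Complex.ofRealCLM.contDiff.comp hb).pow 2
  let f' : C₀(EuclideanSpace ℝ (Fin m), ℂ) :=
    ⟨⟨fun x => p x + f 0 * H x, by fun_prop⟩, (hpc.add hH').is_zero_at_infty⟩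
  refine ⟨f', ⟨fun x => p x / (b x : ℂ) ^ 2, f 0, hp.div_of_eventuallyEq_zero hb2 hpb,
      hpc.mono fun x hx hpx => hx (by simp [hpx]), by simp [hpY.self_of_nhdsSet (Or.inr rfl)],
      fun x => ?_⟩, ?_⟩
  · simp only [f', ZeroAtInftyContinuousMap.coe_mk]
    rw [mul_div_cancel_of_imp' fun hx => (hpb x hx).self_of_nhds]
  · refine lt_of_le_of_lt ((ZeroAtInftyContinuousMap.dist_le (half_pos hε).le).mpr fun x => ?_)
      (half_lt_self hε)
    simpa [f', dist_eq_norm, sub_add_eq_sub_sub_swap] using hfp x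

theorem closure_of_bab_plus_H_eq_functions_constant_on_Y
    {m : ℕ} (b : EuclideanSpace ℝ (Fin m) → ℝ)
    (hb : ContDiff ℝ (⊤ : ℕ∞) b)
    (hb1 : ∃ K : Set (EuclideanSpace ℝ (Fin m)), IsCompact K ∧ ∀ x ∉ K, b x = 1)
    (H : EuclideanSpace ℝ (Fin m) → ℝ) (hH : ContDiff ℝ (⊤ : ℕ∞) H)
    (hHc : HasCompactSupport H)
    (hH1 : ∀ x ∈ closure {x | b x ≠ 1} ∪ ({0} : Set (EuclideanSpace ℝ (Fin m))),
      H x = 1) :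
    closure {f : C₀(EuclideanSpace ℝ (Fin m), ℂ) |
        ∃ (a : EuclideanSpace ℝ (Fin m) → ℂ) (lam : ℂ),
          ContDiff ℝ (⊤ : ℕ∞) a ∧ HasCompactSupport a ∧ a 0 = 0 ∧
          ∀ x, f x = (↑(b x) : ℂ) ^ 2 * a x + lam * (↑(H x) : ℂ)}
      = {f : C₀(EuclideanSpace ℝ (Fin m), ℂ) |
          ∀ x ∈ b ⁻¹' {0} ∪ ({0} : Set (EuclideanSpace ℝ (Fin m))),
          ∀ y ∈ b ⁻¹' {0} ∪ ({0} : Set (EuclideanSpace ℝ (Fin m))),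
            f x = f y} :=
  closure_of_bab_plus_H_eq_functions_constant_on_Y_general b hb H hH hHc hH1
end

section
/- Let F : ℝ^n → ℝ be a bounded smooth function which is equal to 1 on some neighborhood of the origin. For ℏ ∈ [0,1] define b_ℏ : ℝ^n → ℝ by b_ℏ(x) = F(ℏ·x). Then for every a ∈ C₀(ℝ^n), the map ℏ ↦ (x ↦ b_ℏ(x)²·a(x)) from [0,1] to C₀(ℝ^n) is continuous with respect to the supremum norm. -/
open Filter Topology Function
open scoped ZeroAtInfty

/-! As `ℏ → ℏ₀`, `b_ℏ² → b_ℏ₀²` only uniformly on compact sets, but these multipliers are uniformly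
bounded while `a` is small off a compact set; estimating `(b_ℏ² - b_ℏ₀²) a` separately on a compact
set and on its complement gives uniform convergence. -/

namespace ZeroAtInftyContinuousMap

variable {X β : Type*} [TopologicalSpace X] [SeminormedRing β]

theorem norm_apply_le (a : C₀(X, β)) (x : X) : ‖a x‖ ≤ ‖a‖ :=
  norm_toBCF_eq_norm (f := a) ▸ a.toBCF.norm_coe_le_norm x

theorem tendstoUniformly_mul_of_forall_isCompact {ι : Type*} {l : Filter ι} {F : ι → X → β}
    {f : X → β} {C : ℝ} (hC : ∀ i x, ‖F i x - f x‖ ≤ C)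
    (hF : ∀ K, IsCompact K → TendstoUniformlyOn F f l K) (a : C₀(X, β)) :
    TendstoUniformly (fun i x => F i x * a x) (fun x => f x * a x) l := by
  rw [Metric.tendstoUniformly_iff]
  intro ε hε
  set D := max C 1
  have hD : 0 < D := lt_max_of_lt_right one_pos
  have tail : ∀ᶠ x in cocompact X, ‖a x‖ < ε / D :=
    (tendsto_zero_iff_norm_tendsto_zero.mp a.zero_at_infty').eventually_lt_const (by positivity)
  obtain ⟨K, hK, hKc⟩ := mem_cocompact.mp tail
  filter_upwards [Metric.tendstoUniformlyOn_iff.mp (hF K hK) (ε / (‖a‖ + 1)) (by positivity)]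
    with i hi x
  rw [dist_eq_norm, ← sub_mul]
  refine (norm_mul_le _ _).trans_lt ?_
  by_cases hx : x ∈ K
  · calc ‖f x - F i x‖ * ‖a x‖ ≤ ε / (‖a‖ + 1) * ‖a‖ :=
          mul_le_mul (dist_eq_norm (f x) (F i x) ▸ (hi x hx).le) (a.norm_apply_le x)
            (norm_nonneg _) (by positivity)
      _ < ε := by
          rw [div_mul_eq_mul_div, div_lt_iff₀ (by positivity)]
          nlinarith
  · have hdiff : ‖f x - F i x‖ ≤ D := norm_sub_rev (F i x) (f x) ▸ (hC i x).trans (le_max_left _ _)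
    calc ‖f x - F i x‖ * ‖a x‖ ≤ D * ‖a x‖ := by gcongr
      _ < D * (ε / D) := by gcongr; exact hKc hx
      _ = ε := mul_div_cancel₀ ε hD.ne'

theorem continuous_of_continuous_uncurry_mul {T : Type*} [TopologicalSpace T] {b : T → X → β}
    (hb : Continuous (uncurry b)) {C : ℝ} (hC : ∀ t x, ‖b t x‖ ≤ C) (a : C₀(X, β))
    {G : T → C₀(X, β)} (hG : ∀ t x, G t x = b t x * a x) : Continuous G := by
  refine continuous_iff_continuousAt.mpr fun t₀ => ?_
  rw [ContinuousAt, tendsto_iff_tendstoUniformly]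
  have hcompact := (ContinuousMap.curry ⟨uncurry b, hb⟩).continuous.tendsto t₀
  rw [ContinuousMap.tendsto_iff_forall_isCompact_tendstoUniformlyOn] at hcompact
  have hdiff (t : T) (x : X) : ‖b t x - b t₀ x‖ ≤ C + C :=
    (norm_sub_le _ _).trans (add_le_add (hC t x) (hC t₀ x))
  convert tendstoUniformly_mul_of_forall_isCompact hdiff hcompact a using 1
  · exact funext fun t => funext (hG t)
  · exact funext (hG t₀)

end ZeroAtInftyContinuousMap

theorem continuity_of_dilated_field_sections_general
    {n : ℕ} (F : EuclideanSpace ℝ (Fin n) → ℝ)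
    (hF : ContDiff ℝ (⊤ : ℕ∞) F) (hbd : ∃ C : ℝ, ∀ x, |F x| ≤ C) :
    ∀ (a : C₀(EuclideanSpace ℝ (Fin n), ℂ))
      (G : Set.Icc (0 : ℝ) 1 → C₀(EuclideanSpace ℝ (Fin n), ℂ)),
      (∀ (ℏ : Set.Icc (0 : ℝ) 1) x, G ℏ x = (↑(F ((ℏ : ℝ) • x)) : ℂ) ^ 2 * a x) →
      Continuous G := by
  intro a G hG
  obtain ⟨C, hC⟩ := hbd
  have hF_cont : Continuous F := hF.continuous
  refine ZeroAtInftyContinuousMap.continuous_of_continuous_uncurry_mul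
    (b := fun (ℏ : Set.Icc (0 : ℝ) 1) x => (F ((ℏ : ℝ) • x) : ℂ) ^ 2) (by fun_prop) (C := C ^ 2)
    (fun ℏ x => ?_) a hG
  rw [norm_pow, Complex.norm_real, Real.norm_eq_abs]
  exact pow_le_pow_left₀ (abs_nonneg _) (hC _) 2

theorem continuity_of_dilated_field_sections
    {n : ℕ} (F : EuclideanSpace ℝ (Fin n) → ℝ)
    (hF : ContDiff ℝ (⊤ : ℕ∞) F) (hbd : ∃ C : ℝ, ∀ x, |F x| ≤ C)
    (hnbhd : ∀ᶠ x in nhds (0 : EuclideanSpace ℝ (Fin n)), F x = 1) :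
    ∀ (a : C₀(EuclideanSpace ℝ (Fin n), ℂ))
      (G : Set.Icc (0 : ℝ) 1 → C₀(EuclideanSpace ℝ (Fin n), ℂ)),
      (∀ (ℏ : Set.Icc (0 : ℝ) 1) x, G ℏ x = (↑(F ((ℏ : ℝ) • x)) : ℂ) ^ 2 * a x) →
      Continuous G :=
  continuity_of_dilated_field_sections_general F hF hbd
end
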